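/- arXiv:1007.0533 — 3 statements merged into one kernel-verified Lean document; each statement's English description precedes it below -/
import Mathlib

section
/- Let G be an abelian group and φ : G → G an endomorphism. For every positive integer k, h(φ^k) = k·h(φ) (with the convention k·∞ = ∞). Moreover, if φ is an automorphism of G, then h(φ^k) = |k|·h(φ) for every integer k. -/
open Pointwise

/-- The `n`-th φ-trajectory `T_n(φ,F) = F + φ(F) + ⋯ + φ^{n-1}(F)` of a finite subset `F`. -/
noncomputable def traj {G : Type*} [AddCommGroup G] (φ : AddMonoid.End G) (F : Finset G)
    (n : ℕ) : Finset G :=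
  letI := Classical.decEq G
  ∑ k ∈ Finset.range n, F.image (φ ^ k)

section Traj
attribute [local instance] Classical.decEq
variable {G : Type*} [AddCommGroup G] (φ : AddMonoid.End G) (F F' : Finset G)

lemma traj_zero : traj φ F 0 = 0 := by simp [traj]

lemma traj_succ (n : ℕ) : traj φ F (n + 1) = traj φ F n + F.image ⇑(φ ^ n) := by
  simp [traj, Finset.sum_range_succ]

lemma traj_one : traj φ F 1 = F := by
  simp [traj]

lemma zero_mem_traj (h0 : (0:G) ∈ F) : ∀ n, (0:G) ∈ traj φ F n := by
  intro n
  induction n with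
  | zero => rw [traj_zero]; exact Finset.zero_mem_zero
  | succ n ih =>
      rw [traj_succ]
      have : (0:G) ∈ F.image ⇑(φ ^ n) := Finset.mem_image.mpr ⟨0, h0, map_zero _⟩
      simpa using Finset.add_mem_add ih this

lemma traj_mono {F F' : Finset G} (h : F ⊆ F') : ∀ n, traj φ F n ⊆ traj φ F' n := by
  intro n
  induction n with
  | zero => rw [traj_zero, traj_zero]
  | succ n ih =>
      rw [traj_succ, traj_succ]
      exact Finset.add_subset_add ih (Finset.image_subset_image h)

lemma traj_nonempty (hF : F.Nonempty) : ∀ n, (traj φ F n).Nonempty := by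
  intro n
  induction n with
  | zero => rw [traj_zero]; exact ⟨0, Finset.zero_mem_zero⟩
  | succ n ih => rw [traj_succ]; exact ih.add (hF.image _)

lemma traj_image (g : AddMonoid.End G) (n : ℕ) :
    (traj φ F n).image ⇑g = ∑ k ∈ Finset.range n, F.image (⇑g ∘ ⇑(φ ^ k)) := by
  induction n with
  | zero => simp [traj_zero, Finset.image_zero, Finset.singleton_zero]
  | succ n ih =>
      rw [traj_succ, Finset.image_add, ih, Finset.sum_range_succ, Finset.image_image]

lemma traj_add (m n : ℕ) :
    traj φ F (m + n) = traj φ F m + (traj φ F n).image ⇑(φ ^ m) := by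
  induction n with
  | zero =>
      rw [Nat.add_zero, traj_zero]
      have h0 : (0:Finset G).image ⇑(φ ^ m) = 0 := by
        simp [Finset.image_zero, Finset.singleton_zero]
      rw [h0, add_zero]
  | succ n ih =>
      rw [← Nat.add_assoc, traj_succ, ih, traj_succ, Finset.image_add, add_assoc,
        Finset.image_image, pow_add, AddMonoid.End.coe_mul]
end Traj

/-- The algebraic entropy of `φ` with respect to `F`:
`H(φ,F) = lim_n log|T_n(φ,F)|/n = inf_{n ≥ 1} log|T_n(φ,F)|/n`. -/
noncomputable def entWith {G : Type*} [AddCommGroup G] (φ : AddMonoid.End G) (F : Finset G) : ℝ :=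
  ⨅ n : ℕ, Real.log ((traj φ F (n + 1)).card) / (n + 1)

/-- The algebraic entropy `h(φ) = sup { H(φ,F) : F nonempty finite }`, valued in `[0,∞]`. -/
noncomputable def algEnt {G : Type*} [AddCommGroup G] (φ : AddMonoid.End G) : ENNReal :=
  ⨆ (F : Finset G) (_ : F.Nonempty), ENNReal.ofReal (entWith φ F)

section Ent
attribute [local instance] Classical.decEq
variable {G : Type*} [AddCommGroup G] (φ : AddMonoid.End G) (F : Finset G)

lemma log_nat_mono {a b : ℕ} (h : a ≤ b) : Real.log a ≤ Real.log b := by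
  rcases Nat.eq_zero_or_pos a with rfl | ha
  · simpa using Real.log_natCast_nonneg b
  · exact Real.log_le_log (by exact_mod_cast ha) (by exact_mod_cast h)

lemma card_traj_add_le (m n : ℕ) :
    (traj φ F (m + n)).card ≤ (traj φ F m).card * (traj φ F n).card := by
  rw [traj_add]
  exact Finset.card_add_le.trans (Nat.mul_le_mul_left _ (Finset.card_image_le))

lemma uu_nonneg (n : ℕ) : 0 ≤ Real.log ((traj φ F n).card) := by
  simpa using Real.log_natCast_nonneg _

lemma uu_subadditive (hF : F.Nonempty) :
    Subadditive (fun n => Real.log ((traj φ F n).card)) := by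
  intro m n
  have hm : (0:ℝ) < (traj φ F m).card := by
    exact_mod_cast (traj_nonempty φ F hF m).card_pos
  have hn : (0:ℝ) < (traj φ F n).card := by
    exact_mod_cast (traj_nonempty φ F hF n).card_pos
  calc Real.log ((traj φ F (m + n)).card)
      ≤ Real.log (((traj φ F m).card * (traj φ F n).card : ℕ)) :=
        log_nat_mono (card_traj_add_le φ F m n)
    _ = Real.log ((traj φ F m).card) + Real.log ((traj φ F n).card) := by
        push_cast
        exact Real.log_mul hm.ne' hn.ne'

lemma ciInf_succ_eq_lim (u : ℕ → ℝ) (h : Subadditive u) :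
    (⨅ n : ℕ, u (n + 1) / ((n : ℝ) + 1)) = h.lim := by
  rw [Subadditive.lim, iInf]
  congr 1
  ext x
  constructor
  · rintro ⟨n, rfl⟩
    exact ⟨n + 1, by simp, by push_cast; ring_nf⟩
  · rintro ⟨n, hn, rfl⟩
    obtain ⟨m, rfl⟩ := Nat.exists_eq_add_of_le hn
    exact ⟨m, by push_cast; ring_nf⟩

lemma entWith_eq_lim (hF : F.Nonempty) : entWith φ F = (uu_subadditive φ F hF).lim := by
  rw [entWith]
  exact ciInf_succ_eq_lim (fun m => Real.log ((traj φ F m).card)) _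

end Ent

section Scale
attribute [local instance] Classical.decEq
variable {G : Type*} [AddCommGroup G] (φ : AddMonoid.End G) (F : Finset G)

lemma lim_scale (hF : F.Nonempty) (k : ℕ) (hk : 0 < k) :
    (⨅ n : ℕ, Real.log ((traj φ F (k * (n + 1))).card) / ((n : ℝ) + 1))
      = k * entWith φ F := by
  set u : ℕ → ℝ := fun n => Real.log ((traj φ F n).card) with hu_def
  have hu : Subadditive u := uu_subadditive φ F hF
  have hv : Subadditive (fun n => u (k * n)) := by
    intro m n
    simpa [Nat.mul_add] using hu (k * m) (k * n)
  have hbu : BddBelow (Set.range fun n : ℕ => u n / n) := by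
    refine ⟨0, ?_⟩
    rintro x ⟨n, rfl⟩
    exact div_nonneg (uu_nonneg φ F n) (Nat.cast_nonneg n)
  have hbv : BddBelow (Set.range fun n : ℕ => u (k * n) / n) := by
    refine ⟨0, ?_⟩
    rintro x ⟨n, rfl⟩
    exact div_nonneg (uu_nonneg φ F _) (Nat.cast_nonneg n)
  have h1 : (⨅ n : ℕ, Real.log ((traj φ F (k * (n + 1))).card) / ((n : ℝ) + 1)) = hv.lim :=
    ciInf_succ_eq_lim (fun n => u (k * n)) hv
  have hk' : Filter.Tendsto (fun n : ℕ => k * n) Filter.atTop Filter.atTop :=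
    Filter.tendsto_atTop_mono (fun n => Nat.le_mul_of_pos_left n hk) Filter.tendsto_id
  have h2 : Filter.Tendsto (fun n : ℕ => u (k * n) / ((k * n : ℕ) : ℝ))
      Filter.atTop (nhds hu.lim) := (hu.tendsto_lim hbu).comp hk'
  have h3 : Filter.Tendsto (fun n : ℕ => (k : ℝ) * (u (k * n) / ((k * n : ℕ) : ℝ)))
      Filter.atTop (nhds ((k : ℝ) * hu.lim)) := h2.const_mul _
  have h4 : (fun n : ℕ => u (k * n) / (n : ℝ))
      = fun n : ℕ => (k : ℝ) * (u (k * n) / ((k * n : ℕ) : ℝ)) := by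
    funext n
    rcases Nat.eq_zero_or_pos n with rfl | hn
    · simp
    · rw [Nat.cast_mul, mul_div_assoc']
      rw [mul_div_mul_left _ _ (by exact_mod_cast hk.ne' : (k : ℝ) ≠ 0)]
  have h5 : Filter.Tendsto (fun n : ℕ => u (k * n) / (n : ℝ))
      Filter.atTop (nhds ((k : ℝ) * hu.lim)) := by rw [h4]; exact h3
  have h6 := hv.tendsto_lim hbv
  rw [h1, tendsto_nhds_unique h6 h5, entWith_eq_lim φ F hF]

end Scale

section Pow
attribute [local instance] Classical.decEq
variable {G : Type*} [AddCommGroup G] (φ : AddMonoid.End G) (F : Finset G)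

lemma traj_pow (k : ℕ) : ∀ n, traj (φ ^ k) (traj φ F k) n = traj φ F (k * n) := by
  intro n
  induction n with
  | zero => rw [Nat.mul_zero, traj_zero, traj_zero]
  | succ n ih =>
      rw [traj_succ, ih, ← pow_mul, Nat.mul_succ, traj_add]

lemma entWith_pow_traj (hF : F.Nonempty) (k : ℕ) (hk : 0 < k) :
    entWith (φ ^ k) (traj φ F k) = k * entWith φ F := by
  rw [entWith]
  have : ∀ n : ℕ, traj (φ ^ k) (traj φ F k) (n + 1) = traj φ F (k * (n + 1)) :=
    fun n => traj_pow φ F k (n + 1)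
  simp only [this]
  exact lim_scale φ F hF k hk

lemma subset_traj (h0 : (0:G) ∈ F) {k : ℕ} (hk : 0 < k) : F ⊆ traj φ F k := by
  obtain ⟨m, rfl⟩ : ∃ m, k = 1 + m := ⟨k - 1, by omega⟩
  rw [traj_add, traj_one]
  refine Finset.subset_add_left F ?_
  exact Finset.mem_image.mpr ⟨0, zero_mem_traj φ F h0 m, map_zero _⟩

lemma entWith_mono {F F' : Finset G} (h : F ⊆ F') : entWith φ F ≤ entWith φ F' := by
  rw [entWith, entWith]
  refine ciInf_mono ?_ ?_
  · refine ⟨0, ?_⟩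
    rintro x ⟨n, rfl⟩
    exact div_nonneg (uu_nonneg φ F _) (by positivity)
  · intro n
    have := log_nat_mono (Finset.card_le_card (traj_mono φ h (n + 1)))
    exact div_le_div_of_nonneg_right this (by positivity) |>.trans_eq rfl

lemma entWith_pow_le (h0 : (0:G) ∈ F) (k : ℕ) (hk : 0 < k) :
    entWith (φ ^ k) F ≤ k * entWith φ F := by
  have hsub : ∀ n, traj (φ ^ k) F n ⊆ traj φ F (k * n) := by
    intro n
    induction n with
    | zero => rw [Nat.mul_zero, traj_zero, traj_zero]
    | succ n ih =>
        rw [traj_succ, Nat.mul_succ, traj_add]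
        refine Finset.add_subset_add ih ?_
        rw [← pow_mul]
        exact Finset.image_subset_image (subset_traj φ F h0 hk)
  have step1 : entWith (φ ^ k) F
      ≤ ⨅ n : ℕ, Real.log ((traj φ F (k * (n + 1))).card) / ((n : ℝ) + 1) := by
    rw [entWith]
    refine ciInf_mono ?_ ?_
    · refine ⟨0, ?_⟩
      rintro x ⟨n, rfl⟩
      exact div_nonneg (uu_nonneg _ F _) (by positivity)
    · intro n
      have := log_nat_mono (Finset.card_le_card (hsub (n + 1)))
      exact div_le_div_of_nonneg_right this (by positivity) |>.trans_eq rfl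
  have hF : F.Nonempty := ⟨0, h0⟩
  rw [← lim_scale φ F hF k hk]
  exact step1

end Pow

section Main
attribute [local instance] Classical.decEq
variable {G : Type*} [AddCommGroup G]

lemma algEnt_pow (φ : AddMonoid.End G) (k : ℕ) (hk : 0 < k) :
    algEnt (φ ^ k) = (k : ENNReal) * algEnt φ := by
  apply le_antisymm
  · rw [algEnt]
    refine iSup₂_le fun F hF => ?_
    have h1 : entWith (φ ^ k) F ≤ (k : ℝ) * entWith φ (insert 0 F) :=
      (entWith_mono (φ ^ k) (Finset.subset_insert 0 F)).trans
        (entWith_pow_le φ (insert 0 F) (Finset.mem_insert_self 0 F) k hk)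
    calc ENNReal.ofReal (entWith (φ ^ k) F)
        ≤ ENNReal.ofReal ((k : ℝ) * entWith φ (insert 0 F)) := ENNReal.ofReal_le_ofReal h1
      _ = (k : ENNReal) * ENNReal.ofReal (entWith φ (insert 0 F)) := by
          rw [ENNReal.ofReal_mul (by positivity), ENNReal.ofReal_natCast]
      _ ≤ (k : ENNReal) * algEnt φ := by
          refine mul_le_mul_right ?_ _
          rw [algEnt]
          exact le_iSup₂_of_le (insert 0 F) (Finset.insert_nonempty 0 F) le_rfl
  · rw [algEnt, ENNReal.mul_iSup]
    refine iSup_le fun F => ?_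
    rw [ENNReal.mul_iSup]
    refine iSup_le fun hF => ?_
    have h1 : (k : ENNReal) * ENNReal.ofReal (entWith φ F)
        = ENNReal.ofReal (entWith (φ ^ k) (traj φ F k)) := by
      rw [entWith_pow_traj φ F hF k hk, ENNReal.ofReal_mul (by positivity),
        ENNReal.ofReal_natCast]
    rw [h1, algEnt]
    exact le_iSup₂_of_le (traj φ F k) (traj_nonempty φ F hF k) le_rfl

end Main

def autEnd {G : Type*} [AddCommGroup G] (ψ : AddAut G) : AddMonoid.End G := ψ.toAddMonoidHom

section Aut
attribute [local instance] Classical.decEq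
variable {G : Type*} [AddCommGroup G]

@[simp] lemma autEnd_apply (ψ : AddAut G) (x : G) : autEnd ψ x = ψ x := rfl

lemma aut_one_coe : autEnd (0 : AddAut G) = 1 :=
  DFunLike.ext _ _ fun _ => rfl

lemma aut_pow_coe (ψ : AddAut G) (n : ℕ) : autEnd (n • ψ) = autEnd ψ ^ n := by
  induction n with
  | zero => rw [zero_nsmul, pow_zero]; exact aut_one_coe
  | succ n ih =>
      refine DFunLike.ext _ _ fun x => ?_
      rw [succ_nsmul, pow_succ]
      have h1 : autEnd (n • ψ + ψ) x = autEnd (n • ψ) (ψ x) := by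
        rw [autEnd_apply, autEnd_apply, AddAut.add_apply]
      have h2 : (autEnd ψ ^ n * autEnd ψ) x = (autEnd ψ ^ n) (ψ x) := rfl
      rw [h1, h2, ih]

lemma aut_mul_inv_coe (ψ : AddAut G) : autEnd ψ * autEnd (-ψ) = 1 := by
  refine DFunLike.ext _ _ fun x => ?_
  show ψ ((-ψ) x) = x
  rw [AddAut.neg_def]
  exact ψ.apply_symm_apply x

lemma aut_inv_mul_coe (ψ : AddAut G) : autEnd (-ψ) * autEnd ψ = 1 := by
  refine DFunLike.ext _ _ fun x => ?_
  show (-ψ) (ψ x) = x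
  rw [AddAut.neg_def]
  exact ψ.symm_apply_apply x

lemma aut_pow_cancel (ψ : AddAut G) (m : ℕ) : autEnd ψ ^ m * autEnd (-ψ) ^ m = 1 := by
  have hc : Commute (autEnd ψ) (autEnd (-ψ)) := by
    unfold Commute SemiconjBy
    rw [aut_mul_inv_coe, aut_inv_mul_coe]
  rw [← hc.mul_pow, aut_mul_inv_coe, one_pow]

lemma aut_pow_cancel' (ψ : AddAut G) (m : ℕ) : autEnd (-ψ) ^ m * autEnd ψ ^ m = 1 := by
  have := aut_pow_cancel (-ψ) m
  rwa [neg_neg] at this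

end Aut

section Inv
attribute [local instance] Classical.decEq
variable {G : Type*} [AddCommGroup G] (ψ : AddAut G) (F : Finset G)

lemma traj_inv_image (n : ℕ) :
    (traj (autEnd (-ψ)) F (n + 1)).image ⇑(autEnd ψ ^ n) = traj (autEnd ψ) F (n + 1) := by
  rw [traj_image]
  have hcong : ∀ k ∈ Finset.range (n + 1),
      F.image (⇑(autEnd ψ ^ n) ∘ ⇑(autEnd (-ψ) ^ k)) = F.image ⇑(autEnd ψ ^ (n - k)) := by
    intro k hk
    have hk' : k ≤ n := Nat.lt_succ_iff.mp (Finset.mem_range.mp hk)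
    have : autEnd ψ ^ n * autEnd (-ψ) ^ k = autEnd ψ ^ (n - k) := by
      have hsplit : autEnd ψ ^ n = autEnd ψ ^ (n - k) * autEnd ψ ^ k := by
        rw [← pow_add, Nat.sub_add_cancel hk']
      rw [hsplit, mul_assoc, aut_pow_cancel, mul_one]
    rw [← this, AddMonoid.End.coe_mul]
  rw [Finset.sum_congr rfl hcong]
  have := Finset.sum_range_reflect (fun k => F.image ⇑(autEnd ψ ^ k)) (n + 1)
  simp only [Nat.add_sub_cancel] at this
  rw [this]
  rfl

lemma traj_inv_card (n : ℕ) :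
    (traj (autEnd (-ψ)) F n).card = (traj (autEnd ψ) F n).card := by
  cases n with
  | zero => rw [traj_zero, traj_zero]
  | succ n =>
      rw [← traj_inv_image ψ F n]
      refine (Finset.card_image_of_injective _ ?_).symm
      have hleft : Function.LeftInverse ⇑(autEnd (-ψ) ^ n) ⇑(autEnd ψ ^ n) := by
        intro x
        have := aut_pow_cancel' ψ n
        calc (autEnd (-ψ) ^ n) ((autEnd ψ ^ n) x)
            = (autEnd (-ψ) ^ n * autEnd ψ ^ n) x := rfl
          _ = x := by rw [this]; rfl
      exact hleft.injective

lemma entWith_inv : entWith (autEnd (-ψ)) F = entWith (autEnd ψ) F := by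
  rw [entWith, entWith]
  exact iInf_congr fun n => by rw [traj_inv_card]

lemma algEnt_inv : algEnt (autEnd (-ψ)) = algEnt (autEnd ψ) := by
  rw [algEnt, algEnt]
  exact iSup_congr fun F => iSup_congr fun _ => by rw [entWith_inv]

end Inv

section One
attribute [local instance] Classical.decEq
variable {G : Type*} [AddCommGroup G] (F : Finset G)

lemma exists_coeff (n : ℕ) :
    ∀ x ∈ ∑ _k ∈ Finset.range n, F, ∃ c : G → ℕ, (∀ a, c a ≤ n) ∧ x = ∑ a ∈ F, c a • a := by
  induction n with
  | zero =>
      intro x hx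
      rw [Finset.sum_range_zero] at hx
      refine ⟨0, fun a => le_rfl, ?_⟩
      rw [Finset.mem_zero.mp hx]
      simp
  | succ n ih =>
      intro x hx
      rw [Finset.sum_range_succ] at hx
      obtain ⟨y, hy, a, ha, rfl⟩ := Finset.mem_add.mp hx
      obtain ⟨c, hc, rfl⟩ := ih y hy
      refine ⟨fun b => c b + if b = a then 1 else 0, fun b => ?_, ?_⟩
      · have := hc b
        show c b + (if b = a then 1 else 0) ≤ n + 1
        split <;> omega
      · rw [Finset.sum_congr rfl (fun b _ => add_smul (c b) _ b)]
        rw [Finset.sum_add_distrib]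
        congr 1
        have hstep : ∀ b ∈ F, (if b = a then (1:ℕ) else 0) • b = if b = a then b else 0 := by
          intro b _
          split <;> simp
        rw [Finset.sum_congr rfl hstep, Finset.sum_ite_eq' F a (fun b => b), if_pos ha]

lemma card_sum_const_le (n : ℕ) :
    (∑ _k ∈ Finset.range n, F).card ≤ (n + 1) ^ F.card := by
  have hsub : (∑ _k ∈ Finset.range n, F)
      ⊆ Finset.image (fun c : (↥F → Fin (n + 1)) => ∑ a ∈ F.attach, ((c a : ℕ) • (a : G)))
        Finset.univ := by
    intro x hx
    obtain ⟨c, hc, rfl⟩ := exists_coeff F n x hx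
    refine Finset.mem_image.mpr ⟨fun a => ⟨c a, Nat.lt_succ_of_le (hc a)⟩, Finset.mem_univ _, ?_⟩
    exact Finset.sum_attach F (fun b => c b • b)
  calc (∑ _k ∈ Finset.range n, F).card
      ≤ (Finset.image (fun c : (↥F → Fin (n + 1)) => ∑ a ∈ F.attach, ((c a : ℕ) • (a : G)))
          Finset.univ).card := Finset.card_le_card hsub
    _ ≤ Fintype.card (↥F → Fin (n + 1)) := by
        refine Finset.card_image_le.trans ?_
        rw [Finset.card_univ]
    _ = (n + 1) ^ F.card := by
        rw [Fintype.card_fun, Fintype.card_fin, Fintype.card_coe]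

lemma traj_one_eq (n : ℕ) : traj (1 : AddMonoid.End G) F n = ∑ _k ∈ Finset.range n, F := by
  rw [traj]
  exact Finset.sum_congr rfl fun k _ => by
    rw [one_pow, AddMonoid.End.coe_one, Finset.image_id]

lemma entWith_one_nonpos : entWith (1 : AddMonoid.End G) F ≤ 0 := by
  have hbdd : BddBelow (Set.range fun n : ℕ =>
      Real.log ((traj (1 : AddMonoid.End G) F (n + 1)).card) / ((n : ℝ) + 1)) := by
    refine ⟨0, ?_⟩
    rintro x ⟨n, rfl⟩
    exact div_nonneg (uu_nonneg _ F _) (by positivity)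
  have hb : ∀ n : ℕ, Real.log ((traj (1 : AddMonoid.End G) F (n + 1)).card) / ((n : ℝ) + 1)
      ≤ (F.card : ℝ) * (Real.log ((n : ℝ) + 2) / ((n : ℝ) + 1)) := by
    intro n
    have h1 : ((traj (1 : AddMonoid.End G) F (n + 1)).card : ℕ) ≤ (n + 2) ^ F.card := by
      rw [traj_one_eq]
      simpa [add_assoc] using card_sum_const_le F (n + 1)
    have h2 : Real.log ((traj (1 : AddMonoid.End G) F (n + 1)).card)
        ≤ (F.card : ℝ) * Real.log ((n : ℝ) + 2) := by
      have := log_nat_mono h1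
      rw [Nat.cast_pow] at this
      rw [Real.log_pow] at this
      refine this.trans_eq ?_
      push_cast
      ring
    exact (div_le_div_of_nonneg_right h2 (by positivity)).trans_eq (mul_div_assoc _ _ _)
  have htend : Filter.Tendsto (fun n : ℕ => (F.card : ℝ) * (Real.log ((n : ℝ) + 2) / ((n : ℝ) + 1)))
      Filter.atTop (nhds 0) := by
    have hlog : Filter.Tendsto (fun x : ℝ => Real.log x / x) Filter.atTop (nhds 0) :=
      Real.isLittleO_log_id_atTop.tendsto_div_nhds_zero
    have hcast : Filter.Tendsto (fun n : ℕ => (n : ℝ) + 2) Filter.atTop Filter.atTop :=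
      Filter.tendsto_atTop_add_const_right _ 2 tendsto_natCast_atTop_atTop
    have h0 : Filter.Tendsto (fun n : ℕ => Real.log ((n : ℝ) + 2) / ((n : ℝ) + 2))
        Filter.atTop (nhds 0) := hlog.comp hcast
    have hsq : Filter.Tendsto (fun n : ℕ => Real.log ((n : ℝ) + 2) / ((n : ℝ) + 1))
        Filter.atTop (nhds 0) := by
      refine squeeze_zero (fun n => ?_) (fun n => ?_) (by simpa using h0.const_mul (2 : ℝ))
      · exact div_nonneg (Real.log_nonneg (by push_cast; linarith)) (by positivity)
      · have hle : Real.log ((n : ℝ) + 2) / ((n : ℝ) + 1)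
            ≤ 2 * (Real.log ((n : ℝ) + 2) / ((n : ℝ) + 2)) := by
          rw [mul_div_assoc']
          rw [div_le_div_iff₀ (by positivity) (by positivity)]
          have hlog0 : 0 ≤ Real.log ((n : ℝ) + 2) := Real.log_nonneg (by push_cast; linarith)
          nlinarith
        exact hle
    simpa using hsq.const_mul (F.card : ℝ)
  refine ge_of_tendsto htend (Filter.Eventually.of_forall fun n => ?_)
  calc entWith (1 : AddMonoid.End G) F
      ≤ Real.log ((traj (1 : AddMonoid.End G) F (n + 1)).card) / ((n : ℝ) + 1) := by
        rw [entWith]; exact ciInf_le hbdd n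
    _ ≤ _ := hb n

lemma algEnt_one : algEnt (1 : AddMonoid.End G) = 0 := by
  rw [algEnt]
  refine le_antisymm (iSup₂_le fun F hF => ?_) zero_le
  rw [ENNReal.ofReal_eq_zero.mpr (entWith_one_nonpos F)]

end One

/-- `h(φ^k) = k·h(φ)` for every positive integer `k`; and for an automorphism `ψ`,
`h(ψ^k) = |k|·h(ψ)` for every integer `k`. -/
theorem stmt3 {G : Type*} [AddCommGroup G] :
    (∀ (φ : AddMonoid.End G) (k : ℕ), 0 < k → algEnt (φ ^ k) = (k : ENNReal) * algEnt φ) ∧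
    (∀ (ψ : AddAut G) (k : ℤ),
      algEnt ((k • ψ).toAddMonoidHom : AddMonoid.End G) =
        (k.natAbs : ENNReal) * algEnt (ψ.toAddMonoidHom : AddMonoid.End G)) := by
  constructor
  · exact algEnt_pow
  · intro ψ k
    show algEnt (autEnd (k • ψ)) = (k.natAbs : ENNReal) * algEnt (autEnd ψ)
    rcases eq_or_ne k 0 with rfl | hk
    · rw [zero_zsmul, aut_one_coe, algEnt_one]
      simp
    · have hpos : 0 < k.natAbs := Int.natAbs_pos.mpr hk
      rcases Int.natAbs_eq k with h | h
      · rw [h, natCast_zsmul, aut_pow_coe]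
        exact algEnt_pow (autEnd ψ) k.natAbs hpos
      · have : k • ψ = (k.natAbs) • (-ψ) :=
          calc k • ψ = (-(k.natAbs : ℤ)) • ψ := by rw [← h]
            _ = -((k.natAbs : ℤ) • ψ) := neg_zsmul ψ _
            _ = -(k.natAbs • ψ) := by rw [natCast_zsmul]
            _ = k.natAbs • (-ψ) := (neg_nsmul ψ _).symm
        rw [this, aut_pow_coe]
        rw [algEnt_pow (autEnd (-ψ)) k.natAbs hpos, algEnt_inv]
end

section
/- Let G be an abelian group and φ : G → G an endomorphism. Then there exists a countable φ-invariant subgroup S of G such that h(φ↾_S) = h(φ). -/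
open Pointwise

/-- Restriction of an endomorphism to an invariant subgroup. -/
def restrictEnd {G : Type*} [AddCommGroup G] (φ : AddMonoid.End G) (H : AddSubgroup G)
    (h : ∀ x ∈ H, φ x ∈ H) : AddMonoid.End H :=
  AddMonoidHom.codRestrict ((φ : G →+ G).comp H.subtype) H (fun x => h x x.2)

/-- The endomorphism induced on the quotient by an invariant subgroup. -/
def quotEnd {G : Type*} [AddCommGroup G] (φ : AddMonoid.End G) (H : AddSubgroup G)
    (h : ∀ x ∈ H, φ x ∈ H) : AddMonoid.End (G ⧸ H) :=
  QuotientAddGroup.map H H (φ : G →+ G) h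

section Aux

variable {G H : Type*} [AddCommGroup G] [AddCommGroup H]

lemma countable_addClosure {s : Set G} (hs : s.Countable) :
    ((AddSubgroup.closure s : AddSubgroup G) : Set G).Countable := by
  have hs' : (s ∪ -s).Countable := hs.union (by simpa using hs.image (fun x => -x))
  haveI := hs'.to_subtype
  have hsub : ((AddSubgroup.closure s : AddSubgroup G) : Set G) ⊆
      Set.range (fun l : List (s ∪ -s : Set G) => (l.map Subtype.val).sum) := by
    intro x hx
    have hx' : x ∈ AddSubmonoid.closure (s ∪ -s) := by
      rw [← AddSubgroup.closure_toAddSubmonoid]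
      exact hx
    obtain ⟨l, hl, rfl⟩ := AddSubmonoid.exists_list_of_mem_closure hx'
    refine ⟨l.attach.map (fun y => (⟨y.1, hl y.1 y.2⟩ : (s ∪ -s : Set G))), ?_⟩
    simp [List.map_map, Function.comp_def]
  exact (Set.countable_range _).mono hsub

lemma pow_comm_of_comm (f : G →+ H) (ψ : AddMonoid.End G) (φ : AddMonoid.End H)
    (hc : ∀ x, f (ψ x) = φ (f x)) (k : ℕ) (x : G) : f ((ψ ^ k) x) = (φ ^ k) (f x) := by
  induction k generalizing x with
  | zero => simp
  | succ k ih =>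
    rw [pow_succ, pow_succ]
    exact (ih (ψ x)).trans (by rw [hc x]; rfl)

lemma traj_image_s10 (f : G →+ H) (ψ : AddMonoid.End G) (φ : AddMonoid.End H)
    (hc : ∀ x, f (ψ x) = φ (f x)) (F : Finset G) (n : ℕ) :
    letI := Classical.decEq G
    letI := Classical.decEq H
    (traj ψ F n).image f = traj φ (F.image f) n := by
  letI := Classical.decEq G
  letI := Classical.decEq H
  induction n with
  | zero =>
    simp only [traj, Finset.range_zero, Finset.sum_empty]
    ext y
    simp [Finset.mem_zero, eq_comm]
  | succ n ih =>
    simp only [traj, Finset.sum_range_succ] at ih ⊢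
    rw [Finset.image_add, ih, Finset.image_image, Finset.image_image]
    congr 1
    ext y
    simp only [Finset.mem_image, Function.comp_apply]
    constructor
    · rintro ⟨x, hx, rfl⟩; exact ⟨x, hx, (pow_comm_of_comm f ψ φ hc n x).symm⟩
    · rintro ⟨x, hx, rfl⟩; exact ⟨x, hx, pow_comm_of_comm f ψ φ hc n x⟩

lemma entWith_image (f : G →+ H) (hf : Function.Injective f)
    (ψ : AddMonoid.End G) (φ : AddMonoid.End H)
    (hc : ∀ x, f (ψ x) = φ (f x)) (F : Finset G) :
    letI := Classical.decEq H
    entWith ψ F = entWith φ (F.image f) := by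
  letI := Classical.decEq H
  unfold entWith
  congr 1
  funext n
  rw [← traj_image_s10 f ψ φ hc F (n + 1), Finset.card_image_of_injective _ hf]

end Aux

/-- Existence of a countable `φ`-invariant entropy support: a countable `φ`-invariant
subgroup `S ≤ G` with `h(φ↾_S) = h(φ)`. -/
theorem stmt10 {G : Type*} [AddCommGroup G] (φ : AddMonoid.End G) :
    ∃ (S : AddSubgroup G) (hinv : ∀ x ∈ S, φ x ∈ S),
      (S : Set G).Countable ∧ algEnt (restrictEnd φ S hinv) = algEnt φ := by
  classical
  set g : Finset G → ENNReal := fun F => ⨆ _ : F.Nonempty, ENNReal.ofReal (entWith φ F) with hg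
  have hne : (Set.range g).Nonempty := ⟨g ∅, Set.mem_range_self _⟩
  obtain ⟨u, hu_mono, hu_tendsto, hu_mem⟩ :=
    exists_seq_tendsto_sSup hne (OrderTop.bddAbove _)
  choose F hF using hu_mem
  have halg : algEnt φ = ⨆ n, g (F n) := by
    have h1 : Filter.Tendsto u Filter.atTop (nhds (⨆ n, u n)) :=
      tendsto_atTop_iSup hu_mono
    have h2 : (⨆ n, u n) = sSup (Set.range g) := tendsto_nhds_unique h1 hu_tendsto
    have h3 : sSup (Set.range g) = ⨆ C, g C := by rw [sSup_range]
    rw [algEnt, ← h3, ← h2]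
    exact congrArg _ (funext fun n => (hF n).symm)
  set X : Set G := ⋃ (n : ℕ) (m : ℕ), (φ ^ m) '' (F n : Set G) with hX
  set S : AddSubgroup G := AddSubgroup.closure X with hS
  have hXc : X.Countable :=
    Set.countable_iUnion fun n => Set.countable_iUnion fun m =>
      ((F n).finite_toSet.image _).countable
  have hSc : (S : Set G).Countable := countable_addClosure hXc
  have hφX : φ '' X ⊆ X := by
    rintro _ ⟨x, hx, rfl⟩
    simp only [hX, Set.mem_iUnion] at hx ⊢
    obtain ⟨n, m, y, hy, rfl⟩ := hx
    exact ⟨n, m + 1, y, hy, by rw [pow_succ']; rfl⟩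
  have hinv : ∀ x ∈ S, φ x ∈ S := by
    intro x hx
    have : S.map (φ : G →+ G) ≤ S := by
      rw [hS]
      refine (AddMonoidHom.map_closure (φ : G →+ G) X).le.trans ?_
      exact AddSubgroup.closure_le _ |>.2 (hφX.trans AddSubgroup.subset_closure)
    exact this (AddSubgroup.mem_map_of_mem _ hx)
  have hFS : ∀ n, (F n : Set G) ⊆ (S : Set G) := by
    intro n x hx
    apply AddSubgroup.subset_closure
    simp only [hX, Set.mem_iUnion]
    exact ⟨n, 0, x, hx, by simp⟩
  refine ⟨S, hinv, hSc, ?_⟩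
  set ψ := restrictEnd φ S hinv with hψ
  have hcomm : ∀ x : S, (S.subtype) (ψ x) = φ (S.subtype x) := fun x => rfl
  have key : ∀ F' : Finset S, entWith ψ F' = entWith φ (F'.image S.subtype) := fun F' =>
    entWith_image S.subtype Subtype.val_injective ψ φ hcomm F'
  apply le_antisymm
  · refine iSup₂_le fun F' hF' => ?_
    rw [key F']
    exact le_iSup₂_of_le (F'.image S.subtype) (hF'.image _) le_rfl
  · rw [halg]
    refine iSup_le fun n => ?_
    by_cases hne' : (F n).Nonempty
    · have hgn : g (F n) = ENNReal.ofReal (entWith φ (F n)) := by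
        rw [hg]; exact iSup_pos hne'
      set F' : Finset S := (F n).subtype (· ∈ S) with hF'
      have himg : F'.image S.subtype = F n := by
        ext x
        constructor
        · intro hx
          obtain ⟨y, hy, rfl⟩ := Finset.mem_image.1 hx
          exact Finset.mem_subtype.1 hy
        · intro hx
          exact Finset.mem_image.2 ⟨⟨x, hFS n hx⟩, Finset.mem_subtype.2 hx, rfl⟩
      have hF'ne : F'.Nonempty := by
        rw [← Finset.image_nonempty (f := S.subtype), himg]; exact hne'
      rw [hgn, ← himg, ← key F']
      exact le_iSup₂_of_le F' hF'ne le_rfl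
    · have h0 : g (F n) = 0 := by
        rw [hg]
        simpa using iSup_neg (f := fun _ : (F n).Nonempty => ENNReal.ofReal (entWith φ (F n))) hne'
      rw [h0]
      exact zero_le
end

section
/- Let G be an abelian group, φ : G → G an endomorphism, and H, K two φ-invariant subgroups of G. If the Addition Theorem holds for the five triples (G, φ, K), (H, φ↾_H, H∩K), (K, φ↾_K, H∩K), (G/H, φ̄_H, (H+K)/H), and (G/K, φ̄_K, (H+K)/K), then the Addition Theorem holds for (G, φ, H), i.e. h(φ) = h(φ↾_H) + h(φ̄_H). -/
open Pointwise

/-- `AT φ H hinv` states that the Addition Theorem holds for the triple `(G,φ,H)`: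
`h(φ) = h(φ↾_H) + h(φ̄)`. -/
def AT {G : Type*} [AddCommGroup G] (φ : AddMonoid.End G) (H : AddSubgroup G)
    (hinv : ∀ x ∈ H, φ x ∈ H) : Prop :=
  algEnt φ = algEnt (restrictEnd φ H hinv) + algEnt (quotEnd φ H hinv)

section AuxEntropy

/-- Image of a finset under a map, with classical decidable equality. -/
noncomputable def imgE {G G' : Type*} (ψ : G → G') (F : Finset G) : Finset G' :=
  letI := Classical.decEq G'
  F.image ψ

open Pointwise in
lemma traj_image_s12 {G G' : Type*} [AddCommGroup G] [AddCommGroup G']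
    (φ : AddMonoid.End G) (φ' : AddMonoid.End G') (ψ : G ≃+ G')
    (hc : ∀ g, ψ (φ g) = φ' (ψ g)) (F : Finset G) (n : ℕ) :
    traj φ' (imgE ψ F) n = imgE ψ (traj φ F n) := by
  letI := Classical.decEq G
  letI := Classical.decEq G'
  have hpow : ∀ (k : ℕ) (g : G), ψ ((φ ^ k) g) = (φ' ^ k) (ψ g) := by
    intro k
    induction k with
    | zero => intro g; simp
    | succ k ih =>
      intro g
      rw [pow_succ, pow_succ]
      show ψ ((φ ^ k) (φ g)) = (φ' ^ k) (φ' (ψ g))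
      rw [← hc, ih]
  unfold traj imgE
  induction n with
  | zero =>
    ext x
    simp [Finset.mem_zero]
  | succ n ih =>
    rw [Finset.sum_range_succ, Finset.sum_range_succ, ih, Finset.image_add ψ]
    congr 1
    rw [Finset.image_image, Finset.image_image]
    apply Finset.image_congr
    intro a _
    exact (hpow n a).symm

lemma entWith_image_s12 {G G' : Type*} [AddCommGroup G] [AddCommGroup G']
    (φ : AddMonoid.End G) (φ' : AddMonoid.End G') (ψ : G ≃+ G')
    (hc : ∀ g, ψ (φ g) = φ' (ψ g)) (F : Finset G) :
    entWith φ' (imgE ψ F) = entWith φ F := by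
  letI := Classical.decEq G'
  unfold entWith
  congr 1
  ext n
  rw [traj_image_s12 φ φ' ψ hc]
  unfold imgE
  rw [Finset.card_image_of_injective _ ψ.injective]

lemma algEnt_le_conj {G G' : Type*} [AddCommGroup G] [AddCommGroup G']
    (φ : AddMonoid.End G) (φ' : AddMonoid.End G') (ψ : G ≃+ G')
    (hc : ∀ g, ψ (φ g) = φ' (ψ g)) : algEnt φ ≤ algEnt φ' := by
  apply iSup₂_le
  intro F hF
  rw [show entWith φ F = entWith φ' (imgE ψ F) from (entWith_image_s12 φ φ' ψ hc F).symm]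
  letI := Classical.decEq G'
  have hne : (imgE (ψ : G → G') F).Nonempty := by
    unfold imgE; exact hF.image ψ
  exact le_iSup₂ (f := fun (F' : Finset G') (_ : F'.Nonempty) => ENNReal.ofReal (entWith φ' F'))
    (imgE (ψ : G → G') F) hne

lemma algEnt_conj {G G' : Type*} [AddCommGroup G] [AddCommGroup G']
    (φ : AddMonoid.End G) (φ' : AddMonoid.End G') (ψ : G ≃+ G')
    (hc : ∀ g, ψ (φ g) = φ' (ψ g)) : algEnt φ = algEnt φ' := by
  refine le_antisymm (algEnt_le_conj φ φ' ψ hc) (algEnt_le_conj φ' φ ψ.symm ?_)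
  intro g
  apply ψ.injective
  rw [ψ.apply_symm_apply, hc, ψ.apply_symm_apply]

section Isos
open QuotientAddGroup
variable {G : Type*} [AddCommGroup G]

/-- Second isomorphism theorem equiv `A/(B∩A) ≃+ (A+B)/B` (as a subgroup of `G/B`). -/
noncomputable def eqI (A B : AddSubgroup G) (S : AddSubgroup G) (hS : S = A ⊔ B) :
    (A ⧸ B.addSubgroupOf A) ≃+ (S.map (mk' B)) := by
  have hker : ((mk' B).comp A.subtype).ker = B.addSubgroupOf A := by
    ext x
    simp [AddMonoidHom.mem_ker, QuotientAddGroup.eq_zero_iff, AddSubgroup.mem_addSubgroupOf]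
  have hrange : ((mk' B).comp A.subtype).range = S.map (mk' B) := by
    subst hS
    ext q
    simp only [AddMonoidHom.mem_range, AddMonoidHom.coe_comp, Function.comp_apply,
      AddSubgroup.mem_map]
    constructor
    · rintro ⟨⟨a, ha⟩, rfl⟩
      exact ⟨a, AddSubgroup.mem_sup_left ha, rfl⟩
    · rintro ⟨g, hg, rfl⟩
      rcases AddSubgroup.mem_sup.1 hg with ⟨y, hy, z, hz, rfl⟩
      refine ⟨⟨y, hy⟩, ?_⟩
      simp only [AddSubgroup.coe_subtype, mk'_apply]
      rw [QuotientAddGroup.eq]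
      simpa using hz
  exact ((quotientAddEquivOfEq hker.symm).trans
    (quotientKerEquivRange ((mk' B).comp A.subtype))).trans
    (AddEquiv.addSubgroupCongr hrange)

lemma isoI (φ : AddMonoid.End G) (A B : AddSubgroup G)
    (hA : ∀ x ∈ A, φ x ∈ A) (hB : ∀ x ∈ B, φ x ∈ B)
    (hAB : ∀ x ∈ B.addSubgroupOf A, restrictEnd φ A hA x ∈ B.addSubgroupOf A)
    (S : AddSubgroup G) (hS : S = A ⊔ B)
    (hQS : ∀ x ∈ S.map (mk' B), quotEnd φ B hB x ∈ S.map (mk' B)) :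
    algEnt (quotEnd (restrictEnd φ A hA) (B.addSubgroupOf A) hAB)
      = algEnt (restrictEnd (quotEnd φ B hB) (S.map (mk' B)) hQS) := by
  apply algEnt_conj _ _ (eqI A B S hS)
  intro q
  induction q using QuotientAddGroup.induction_on with
  | H x =>
    apply Subtype.ext
    rfl

lemma isoIII (φ : AddMonoid.End G) (B : AddSubgroup G) (hB : ∀ x ∈ B, φ x ∈ B)
    (S : AddSubgroup G) (hBS : B ≤ S) (hSinv : ∀ x ∈ S, φ x ∈ S)
    (hQS : ∀ x ∈ S.map (mk' B), quotEnd φ B hB x ∈ S.map (mk' B)) :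
    algEnt (quotEnd (quotEnd φ B hB) (S.map (mk' B)) hQS) = algEnt (quotEnd φ S hSinv) := by
  apply algEnt_conj _ _ (quotientQuotientEquivQuotient B S hBS)
  intro q
  induction q using QuotientAddGroup.induction_on with
  | H y =>
    induction y using QuotientAddGroup.induction_on with
    | H x => rfl

/-- Swapping the roles in `(H ∩ K)`, seen inside `H` versus inside `K`. -/
def eqSwap (A B : AddSubgroup G) : (B.addSubgroupOf A) ≃+ (A.addSubgroupOf B) where
  toFun x := ⟨⟨(x : A), x.2⟩, (x : A).2⟩
  invFun x := ⟨⟨(x : B), x.2⟩, (x : B).2⟩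
  left_inv _ := rfl
  right_inv _ := rfl
  map_add' _ _ := rfl

lemma isoIV (φ : AddMonoid.End G) (A B : AddSubgroup G)
    (hA : ∀ x ∈ A, φ x ∈ A) (hB : ∀ x ∈ B, φ x ∈ B)
    (hAB : ∀ x ∈ B.addSubgroupOf A, restrictEnd φ A hA x ∈ B.addSubgroupOf A)
    (hBA : ∀ x ∈ A.addSubgroupOf B, restrictEnd φ B hB x ∈ A.addSubgroupOf B) :
    algEnt (restrictEnd (restrictEnd φ A hA) (B.addSubgroupOf A) hAB)
      = algEnt (restrictEnd (restrictEnd φ B hB) (A.addSubgroupOf B) hBA) := by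
  apply algEnt_conj _ _ (eqSwap A B)
  intro x
  rfl

end Isos
end AuxEntropy

/-- If the Addition Theorem holds for `(G,φ,K)`, `(H,φ↾_H,H∩K)`, `(K,φ↾_K,H∩K)`,
`(G/H,φ̄_H,(H+K)/H)` and `(G/K,φ̄_K,(H+K)/K)`, then it holds for `(G,φ,H)`. -/
theorem stmt12 {G : Type*} [AddCommGroup G] (φ : AddMonoid.End G) (H K : AddSubgroup G)
    (hH : ∀ x ∈ H, φ x ∈ H) (hK : ∀ x ∈ K, φ x ∈ K)
    (hHK : ∀ x ∈ K.addSubgroupOf H, restrictEnd φ H hH x ∈ K.addSubgroupOf H)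
    (hKH : ∀ x ∈ H.addSubgroupOf K, restrictEnd φ K hK x ∈ H.addSubgroupOf K)
    (hQH : ∀ x ∈ (H ⊔ K).map (QuotientAddGroup.mk' H),
      quotEnd φ H hH x ∈ (H ⊔ K).map (QuotientAddGroup.mk' H))
    (hQK : ∀ x ∈ (H ⊔ K).map (QuotientAddGroup.mk' K),
      quotEnd φ K hK x ∈ (H ⊔ K).map (QuotientAddGroup.mk' K))
    (a1 : AT φ K hK)
    (a2 : AT (restrictEnd φ H hH) (K.addSubgroupOf H) hHK)
    (a3 : AT (restrictEnd φ K hK) (H.addSubgroupOf K) hKH)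
    (a4 : AT (quotEnd φ H hH) ((H ⊔ K).map (QuotientAddGroup.mk' H)) hQH)
    (a5 : AT (quotEnd φ K hK) ((H ⊔ K).map (QuotientAddGroup.mk' K)) hQK) :
    AT φ H hH := by
  have hSup : ∀ x ∈ H ⊔ K, φ x ∈ H ⊔ K := by
    intro x hx
    rcases AddSubgroup.mem_sup.1 hx with ⟨y, hy, z, hz, rfl⟩
    rw [map_add]
    exact add_mem (AddSubgroup.mem_sup_left (hH y hy)) (AddSubgroup.mem_sup_right (hK z hz))
  have e2 := isoI φ H K hH hK hHK (H ⊔ K) rfl hQK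
  have e3 := isoI φ K H hK hH hKH (H ⊔ K) (sup_comm H K) hQH
  have e4 := isoIII φ K hK (H ⊔ K) le_sup_right hSup hQK
  have e5 := isoIII φ H hH (H ⊔ K) le_sup_left hSup hQH
  have e6 := isoIV φ H K hH hK hHK hKH
  unfold AT at a1 a2 a3 a4 a5 ⊢
  rw [a1, a3, a5, a2, a4, e2, e3, e4, e5, e6]
  ring
end
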